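/- Let S : (I,s,x,y) ↦ (I⁺,s⁺,x⁺,y⁺) be given by I⁺ = I, s⁺ = s + ∂_I Φ(I, xy), y⁺ = x⁻¹ e^{−∂_r Φ(I,xy)}, x⁺ = x² y e^{∂_r Φ(I,xy)}, where Φ(I,r) is C². Then S preserves the product of the hyperbolic coordinates: x⁺ y⁺ = x y, and S is symplectic for the form dI ∧ ds + dy ∧ dx on the domain x > 0. -/

import Mathlib

/-!
With `w = ∂_rΦ(I, xy)`, the map `S` factors as the shear
`(I, s, x, y) ↦ (I, s + ∂_IΦ(I, xy), x e^w, y e^{-w})`, which keeps `xy` fixed, followed by the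
swap `(I, s, x, y) ↦ (I, s, x²y, x⁻¹)`. The swap is symplectic wherever `x ≠ 0`, since
`d(x⁻¹) ∧ d(x²y) = dy ∧ dx`. For the shear, `dy⁺ ∧ dx⁺ = dy ∧ dx - dw ∧ d(xy)` and
`dI ∧ ds⁺ = dI ∧ ds + ∂_r∂_IΦ dI ∧ d(xy)`, so the two correction terms cancel because the mixed
partials of `Φ` agree.
-/

/-- The symplectic bilinear form dI∧ds + dy∧dx on coordinates (I,s,x,y) ∈ ℝ⁴,
evaluated on tangent vectors u, v. -/
noncomputable def Omega6 (u v : ℝ × ℝ × ℝ × ℝ) : ℝ :=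
  u.1 * v.2.1 - u.2.1 * v.1 + u.2.2.2 * v.2.2.1 - u.2.2.1 * v.2.2.2

open Real

def PreservesOmega6 (D : (ℝ × ℝ × ℝ × ℝ) →L[ℝ] (ℝ × ℝ × ℝ × ℝ)) : Prop :=
  ∀ u v, Omega6 (D u) (D v) = Omega6 u v

lemma PreservesOmega6.comp {D D' : (ℝ × ℝ × ℝ × ℝ) →L[ℝ] (ℝ × ℝ × ℝ × ℝ)}
    (h : PreservesOmega6 D) (h' : PreservesOmega6 D') : PreservesOmega6 (D.comp D') :=
  fun u v => by rw [D.comp_apply, D.comp_apply, h, h']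

def SymplecticAt (f : ℝ × ℝ × ℝ × ℝ → ℝ × ℝ × ℝ × ℝ) (z : ℝ × ℝ × ℝ × ℝ) : Prop :=
  ∃ D, HasFDerivAt f D z ∧ PreservesOmega6 D

lemma SymplecticAt.comp {f g : ℝ × ℝ × ℝ × ℝ → ℝ × ℝ × ℝ × ℝ} {z : ℝ × ℝ × ℝ × ℝ}
    (hg : SymplecticAt g (f z)) (hf : SymplecticAt f z) : SymplecticAt (g ∘ f) z := by
  obtain ⟨D, hD, hDω⟩ := hg
  obtain ⟨D', hD', hD'ω⟩ := hf
  exact ⟨D.comp D', hD.comp z hD', hDω.comp hD'ω⟩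

noncomputable def hyperbolicSwap (z : ℝ × ℝ × ℝ × ℝ) : ℝ × ℝ × ℝ × ℝ :=
  (z.1, z.2.1, z.2.2.1 ^ 2 * z.2.2.2, z.2.2.1⁻¹)

lemma hyperbolicSwap_mul (z : ℝ × ℝ × ℝ × ℝ) :
    (hyperbolicSwap z).2.2.1 * (hyperbolicSwap z).2.2.2 = z.2.2.1 * z.2.2.2 := by
  rw [hyperbolicSwap, sq, mul_right_comm, mul_self_mul_inv]

lemma symplecticAt_hyperbolicSwap {z : ℝ × ℝ × ℝ × ℝ} (hx : z.2.2.1 ≠ 0) :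
    SymplecticAt hyperbolicSwap z := by
  have hI := hasFDerivAt_fst (𝕜 := ℝ) (p := z)
  have hs := (hasFDerivAt_snd (𝕜 := ℝ) (p := z)).fst
  have hx' := (hasFDerivAt_snd (𝕜 := ℝ) (p := z)).snd.fst
  have hy := (hasFDerivAt_snd (𝕜 := ℝ) (p := z)).snd.snd
  refine ⟨_, hI.prodMk (hs.prodMk (((hx'.pow 2).mul hy).prodMk
    ((hasDerivAt_inv hx).comp_hasFDerivAt z hx'))), fun u v => ?_⟩
  simp only [Omega6, ContinuousLinearMap.prod_apply, ContinuousLinearMap.coe_fst',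
    ContinuousLinearMap.comp_apply, ContinuousLinearMap.coe_snd', add_apply,
    smul_apply, smul_eq_mul, Nat.add_one_sub_one, pow_one, nsmul_eq_mul,
    Nat.cast_ofNat, neg_smul, neg_apply]
  field_simp
  ring

lemma ContinuousLinearMap.apply_prod_eq (L : ℝ × ℝ →L[ℝ] ℝ) (p q : ℝ) :
    L (p, q) = p * L (1, 0) + q * L (0, 1) := by
  have : ((p, q) : ℝ × ℝ) = p • (1, 0) + q • (0, 1) := by ext <;> simp
  rw [this, map_add, map_smul, map_smul, smul_eq_mul, smul_eq_mul]

noncomputable def hyperbolicShear (F G : ℝ × ℝ → ℝ) (z : ℝ × ℝ × ℝ × ℝ) : ℝ × ℝ × ℝ × ℝ :=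
  (z.1, z.2.1 + F (z.1, z.2.2.1 * z.2.2.2),
    z.2.2.1 * exp (G (z.1, z.2.2.1 * z.2.2.2)), z.2.2.2 * exp (-G (z.1, z.2.2.1 * z.2.2.2)))

lemma hyperbolicShear_mul (F G : ℝ × ℝ → ℝ) (z : ℝ × ℝ × ℝ × ℝ) :
    (hyperbolicShear F G z).2.2.1 * (hyperbolicShear F G z).2.2.2 = z.2.2.1 * z.2.2.2 := by
  rw [hyperbolicShear, exp_neg]
  field_simp

lemma symplecticAt_hyperbolicShear {F G : ℝ × ℝ → ℝ} {a b : ℝ × ℝ →L[ℝ] ℝ}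
    {z : ℝ × ℝ × ℝ × ℝ} (hF : HasFDerivAt F a (z.1, z.2.2.1 * z.2.2.2))
    (hG : HasFDerivAt G b (z.1, z.2.2.1 * z.2.2.2)) (hab : a (0, 1) = b (1, 0)) :
    SymplecticAt (hyperbolicShear F G) z := by
  have hI := hasFDerivAt_fst (𝕜 := ℝ) (p := z)
  have hs := (hasFDerivAt_snd (𝕜 := ℝ) (p := z)).fst
  have hx := (hasFDerivAt_snd (𝕜 := ℝ) (p := z)).snd.fst
  have hy := (hasFDerivAt_snd (𝕜 := ℝ) (p := z)).snd.snd
  have hIr := hI.prodMk (hx.mul hy)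
  have hw := hG.comp z hIr
  refine ⟨_, hI.prodMk ((hs.add (hF.comp z hIr)).prodMk ((hx.mul hw.exp).prodMk
    (hy.mul hw.neg.exp))), fun u v => ?_⟩
  simp only [Omega6, ContinuousLinearMap.prod_apply, ContinuousLinearMap.coe_fst',
    ContinuousLinearMap.comp_apply, ContinuousLinearMap.coe_snd', add_apply,
    smul_apply, smul_eq_mul, neg_apply, Pi.mul_apply,
    Function.comp_apply, Pi.neg_apply, exp_neg, smul_neg]
  field_simp
  simp only [a.apply_prod_eq u.1, a.apply_prod_eq v.1, b.apply_prod_eq u.1,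
    b.apply_prod_eq v.1, hab]
  ring

lemma hyperbolicSwap_comp_hyperbolicShear (F G : ℝ × ℝ → ℝ) :
    hyperbolicSwap ∘ hyperbolicShear F G = fun z =>
      (z.1, z.2.1 + F (z.1, z.2.2.1 * z.2.2.2),
        z.2.2.1 ^ 2 * z.2.2.2 * exp (G (z.1, z.2.2.1 * z.2.2.2)),
        z.2.2.1⁻¹ * exp (-G (z.1, z.2.2.1 * z.2.2.2))) := by
  funext z
  simp only [Function.comp_apply, hyperbolicSwap, hyperbolicShear, mul_inv, exp_neg]
  field_simp

lemma deriv_comp_prodMk_left {Φ : ℝ × ℝ → ℝ} {p : ℝ × ℝ} (h : DifferentiableAt ℝ Φ p) :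
    deriv (fun t => Φ (t, p.2)) p.1 = fderiv ℝ Φ p (1, 0) :=
  (h.hasFDerivAt.comp_hasDerivAt p.1 ((hasDerivAt_id p.1).prodMk (hasDerivAt_const p.1 p.2))).deriv

lemma deriv_comp_prodMk_right {Φ : ℝ × ℝ → ℝ} {p : ℝ × ℝ} (h : DifferentiableAt ℝ Φ p) :
    deriv (fun t => Φ (p.1, t)) p.2 = fderiv ℝ Φ p (0, 1) :=
  (h.hasFDerivAt.comp_hasDerivAt p.2 ((hasDerivAt_const p.2 p.1).prodMk (hasDerivAt_id p.2))).deriv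

lemma ContDiff.exists_hasFDerivAt_partialDerivs {Φ : ℝ × ℝ → ℝ} (hΦ : ContDiff ℝ 2 Φ)
    (p : ℝ × ℝ) : ∃ a b : ℝ × ℝ →L[ℝ] ℝ,
      HasFDerivAt (fun q => deriv (fun t => Φ (t, q.2)) q.1) a p ∧
      HasFDerivAt (fun q => deriv (fun t => Φ (q.1, t)) q.2) b p ∧ a (0, 1) = b (1, 0) := by
  have hd : Differentiable ℝ Φ := hΦ.differentiable two_ne_zero
  have h2 : HasFDerivAt (fderiv ℝ Φ) (fderiv ℝ (fderiv ℝ Φ) p) p :=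
    ((hΦ.fderiv_right le_rfl).differentiable one_ne_zero p).hasFDerivAt
  simp only [deriv_comp_prodMk_left (hd _), deriv_comp_prodMk_right (hd _)]
  exact ⟨_, _, (ContinuousLinearMap.apply ℝ ℝ ((1 : ℝ), (0 : ℝ))).hasFDerivAt.comp p h2,
    (ContinuousLinearMap.apply ℝ ℝ ((0 : ℝ), (1 : ℝ))).hasFDerivAt.comp p h2,
    (hΦ.contDiffAt.isSymmSndFDerivAt (by simp)) _ _⟩

/-- The gluing map S : (I,s,x,y) ↦ (I, s + ∂_IΦ(I,xy),
x²y·e^{∂_rΦ(I,xy)}, x⁻¹e^{−∂_rΦ(I,xy)}) with Φ C² preserves the hyperbolic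
product (x⁺y⁺ = xy) and is symplectic for dI∧ds + dy∧dx on {x > 0}. -/
theorem stmt6 (Φ : ℝ × ℝ → ℝ) (hΦ : ContDiff ℝ 2 Φ)
    (ΦI Φr : ℝ × ℝ → ℝ)
    (hΦI : ΦI = fun p => deriv (fun I => Φ (I, p.2)) p.1)
    (hΦr : Φr = fun p => deriv (fun r => Φ (p.1, r)) p.2)
    (S : ℝ × ℝ × ℝ × ℝ → ℝ × ℝ × ℝ × ℝ)
    (hS : S = fun z =>
      (z.1, z.2.1 + ΦI (z.1, z.2.2.1 * z.2.2.2),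
        z.2.2.1 ^ 2 * z.2.2.2 * Real.exp (Φr (z.1, z.2.2.1 * z.2.2.2)),
        z.2.2.1⁻¹ * Real.exp (-(Φr (z.1, z.2.2.1 * z.2.2.2))))) :
    (∀ z : ℝ × ℝ × ℝ × ℝ, 0 < z.2.2.1 →
      (S z).2.2.1 * (S z).2.2.2 = z.2.2.1 * z.2.2.2) ∧
    (∀ z : ℝ × ℝ × ℝ × ℝ, 0 < z.2.2.1 →
      ∃ D : (ℝ × ℝ × ℝ × ℝ) →L[ℝ] (ℝ × ℝ × ℝ × ℝ),
        HasFDerivAt S D z ∧ ∀ u v, Omega6 (D u) (D v) = Omega6 u v) := by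
  rw [← hyperbolicSwap_comp_hyperbolicShear] at hS
  subst hS
  refine ⟨fun z _ => ?_, fun z hx => ?_⟩
  · rw [Function.comp_apply, hyperbolicSwap_mul, hyperbolicShear_mul]
  · obtain ⟨a, b, ha, hb, hab⟩ := hΦ.exists_hasFDerivAt_partialDerivs (z.1, z.2.2.1 * z.2.2.2)
    subst hΦI hΦr
    refine (symplecticAt_hyperbolicSwap ?_).comp (symplecticAt_hyperbolicShear ha hb hab)
    exact mul_ne_zero hx.ne' (exp_pos _).ne'
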